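/- (Cross-covariance of the filter error with the observation noise.) Under the setting of the assembled error-covariance computation — (ε_l)_{l≥1} ℝ^m-valued and (η_l)_{l≥1} ℝ^n-valued square-integrable, zero-mean, Cov(ε_l) = I_m, Cov(η_l) = I_n, all mutually independent; x₀ ∈ ℝ^n deterministic; x_s = u_s + A x_{s−1} + β η_s; e₀ = 0 and e_s = Ã_s e_{s−1} − B̃_s ε_s − C̃_s η_s + F̃_s x_{s−1} + G̃_s with deterministic coefficient matrices and vectors — for all 0 ≤ h < t one has Cov(e_t, ε_{t−h}) = −(Ã_t Ã_{t−1} ⋯ Ã_{t−h+1}) B̃_{t−h}, where the matrix product is the identity when h = 0. -/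

import Mathlib

open Matrix MeasureTheory ProbabilityTheory

/-- The `a × b` covariance matrix `Cov(X, Y) = E[(X − E X)(Y − E Y)ᵀ]` of two
square-integrable random vectors. -/
noncomputable def covMatrix {Ω : Type*} [MeasureSpace Ω] {a b : ℕ}
    (X : Ω → Fin a → ℝ) (Y : Ω → Fin b → ℝ) : Matrix (Fin a) (Fin b) ℝ :=
  Matrix.of fun i j => ∫ ω, (X ω i - ∫ ω', X ω' i) * (Y ω j - ∫ ω', Y ω' j)

/-- Ordered matrix product `Π_l^t = Atil t * Atil (t-1) * ⋯ * Atil (l+1)`,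
equal to `1` when `l = t`. -/
noncomputable def ordProd {n : ℕ} (Atil : ℕ → Matrix (Fin n) (Fin n) ℝ) (l t : ℕ) :
    Matrix (Fin n) (Fin n) ℝ :=
  (((List.range (t - l)).map (fun j => Atil (t - j))).prod)

/-! Let `𝓕` be the σ-algebra generated by measurable versions of all noises other than
`ε_{t-h}`. Every state `x_s`, and every error `e_s` with `s < t - h`, is a.e. `𝓕`-measurable,
hence independent of, and uncorrelated with, `ε_{t-h}`. Taking covariances with `ε_{t-h}` in the
error recursion therefore gives `Cov(e_{t-h}, ε_{t-h}) = -B̃_{t-h} Cov(ε_{t-h}) = -B̃_{t-h}`, and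
`Cov(e_{s+1}, ε_{t-h}) = Ã_{s+1} Cov(e_s, ε_{t-h})` for `s ≥ t - h`. -/

lemma MeasureTheory.MemLp.mulVec {α : Type*} {_ : MeasurableSpace α} {μ : Measure α}
    {p : ENNReal} {a c : ℕ} {X : α → Fin a → ℝ} (hX : MemLp X p μ)
    (M : Matrix (Fin c) (Fin a) ℝ) : MemLp (fun ω ↦ M *ᵥ X ω) p μ :=
  hX.continuousLinearMap_comp (Matrix.mulVecLin M).toContinuousLinearMap

lemma ProbabilityTheory.iIndepFun.exists_indep_of_aemeasurable
    {Ω ι : Type*} {mΩ : MeasurableSpace Ω} {μ : Measure Ω}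
    {β : ι → Type*} {m : ∀ i, MeasurableSpace (β i)} {f : ∀ i, Ω → β i}
    (hf : iIndepFun f μ) (hmeas : ∀ j, AEMeasurable (f j) μ) (i : ι) :
    ∃ 𝓕 : MeasurableSpace Ω, (∀ j ≠ i, ∃ g : Ω → β j, Measurable[𝓕] g ∧ f j =ᵐ[μ] g) ∧
      ∀ {γ : Type*} [TopologicalSpace γ] [TopologicalSpace.PseudoMetrizableSpace γ]
        [MeasurableSpace γ] [BorelSpace γ] (W : Ω → γ),
        AEStronglyMeasurable[𝓕] W μ → W ⟂ᵢ[μ] f i := by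
  set g := fun j ↦ (hmeas j).mk
  refine ⟨⨆ j ∈ ({i}ᶜ : Set ι), (m j).comap (g j), fun j hj ↦ ⟨g j, ?_, (hmeas j).ae_eq_mk⟩, ?_⟩
  · exact Measurable.of_comap_le (le_biSup (fun j ↦ (m j).comap (g j)) hj)
  intro γ _ _ _ _ W ⟨W', hW'meas, hWW'⟩
  have hindep : Indep (⨆ j ∈ ({i}ᶜ : Set ι), (m j).comap (g j)) ((m i).comap (g i)) μ := by
    simpa using indep_iSup_of_disjoint (fun j ↦ (hmeas j).measurable_mk.comap_le)
      (hf.congr fun j ↦ (hmeas j).ae_eq_mk) (disjoint_compl_left (a := {i}))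
  have : W' ⟂ᵢ[μ] g i := indep_of_indep_of_le_left hindep hW'meas.measurable.comap_le
  exact this.congr hWW'.symm (hmeas i).ae_eq_mk.symm

section covMatrix
variable {Ω : Type*} [MeasureSpace Ω] {a b c : ℕ}

lemma covMatrix_apply (X : Ω → Fin a → ℝ) (Y : Ω → Fin b → ℝ) (i : Fin a) (j : Fin b) :
    covMatrix X Y i j = cov[fun ω ↦ X ω i, fun ω ↦ Y ω j] := rfl

lemma covMatrix_eq_zero_of_indepFun {X : Ω → Fin a → ℝ} {Y : Ω → Fin b → ℝ} (h : X ⟂ᵢ Y)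
    (hX : MemLp X 2 ℙ) (hY : MemLp Y 2 ℙ) : covMatrix X Y = 0 := by
  ext i j
  exact (h.comp (measurable_pi_apply i) (measurable_pi_apply j)).covariance_eq_zero
    (hX.eval i) (hY.eval j)

variable [IsProbabilityMeasure (ℙ : Measure Ω)] {X X' : Ω → Fin a → ℝ} {Y : Ω → Fin b → ℝ}

lemma covMatrix_add_left (hX : MemLp X 2 ℙ) (hX' : MemLp X' 2 ℙ) (hY : MemLp Y 2 ℙ) :
    covMatrix (fun ω ↦ X ω + X' ω) Y = covMatrix X Y + covMatrix X' Y := by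
  ext i j
  exact covariance_add_left (hX.eval i) (hX'.eval i) (hY.eval j)

lemma covMatrix_sub_left (hX : MemLp X 2 ℙ) (hX' : MemLp X' 2 ℙ) (hY : MemLp Y 2 ℙ) :
    covMatrix (fun ω ↦ X ω - X' ω) Y = covMatrix X Y - covMatrix X' Y := by
  ext i j
  exact covariance_sub_left (hX.eval i) (hX'.eval i) (hY.eval j)

lemma covMatrix_add_const_left (hX : Integrable X ℙ) (g : Fin a → ℝ) :
    covMatrix (fun ω ↦ X ω + g) Y = covMatrix X Y := by
  ext i j
  exact covariance_add_const_left (hX.eval i) (g i)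

lemma covMatrix_mulVec_left (M : Matrix (Fin c) (Fin a) ℝ) (hX : MemLp X 2 ℙ)
    (hY : MemLp Y 2 ℙ) : covMatrix (fun ω ↦ M *ᵥ X ω) Y = M * covMatrix X Y := by
  ext i j
  simp only [covMatrix_apply, mulVec, dotProduct, mul_apply]
  rw [covariance_fun_sum_left (fun k ↦ (hX.eval k).const_mul (M i k)) (hY.eval j)]
  simp only [covariance_const_mul_left]

end covMatrix

section ordProd
variable {n : ℕ} (Atil : ℕ → Matrix (Fin n) (Fin n) ℝ) (l d : ℕ)

@[simp]
lemma ordProd_self : ordProd Atil l l = 1 := by simp [ordProd]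

lemma ordProd_add_one :
    ordProd Atil l (l + d + 1) = Atil (l + d + 1) * ordProd Atil l (l + d) := by
  rw [ordProd, ordProd, show l + d + 1 - l = d + 1 by omega, Nat.add_sub_cancel_left,
    List.range_succ_eq_map, List.map_cons, List.prod_cons, List.map_map, Nat.sub_zero]
  congr 2
  exact List.map_congr_left fun j _ ↦ congrArg Atil (by omega)

end ordProd

section StateSpaceModel
variable {Ω : Type*} [MeasureSpace Ω] {n m : ℕ}

structure IsStateRecursion (A β : Matrix (Fin n) (Fin n) ℝ) (u : ℕ → Fin n → ℝ)
    (x₀ : Fin n → ℝ) (η : ℕ → Ω → Fin n → ℝ) (x : ℕ → Ω → Fin n → ℝ) : Prop where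
  zero : ∀ ω, x 0 ω = x₀
  succ : ∀ s ω, x (s + 1) ω = u (s + 1) + A *ᵥ x s ω + β *ᵥ η (s + 1) ω

structure IsErrorRecursion (Atil : ℕ → Matrix (Fin n) (Fin n) ℝ)
    (Btil : ℕ → Matrix (Fin n) (Fin m) ℝ) (Ctil Ftil : ℕ → Matrix (Fin n) (Fin n) ℝ)
    (Gtil : ℕ → Fin n → ℝ) (εv : ℕ → Ω → Fin m → ℝ) (η x : ℕ → Ω → Fin n → ℝ)
    (e : ℕ → Ω → Fin n → ℝ) : Prop where
  zero : ∀ ω, e 0 ω = 0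
  succ : ∀ s ω, e (s + 1) ω = Atil (s + 1) *ᵥ e s ω - Btil (s + 1) *ᵥ εv (s + 1) ω
    - Ctil (s + 1) *ᵥ η (s + 1) ω + Ftil (s + 1) *ᵥ x s ω + Gtil (s + 1)

variable {A β : Matrix (Fin n) (Fin n) ℝ} {u : ℕ → Fin n → ℝ} {x₀ : Fin n → ℝ}
  {Atil Ctil Ftil : ℕ → Matrix (Fin n) (Fin n) ℝ} {Btil : ℕ → Matrix (Fin n) (Fin m) ℝ}
  {Gtil : ℕ → Fin n → ℝ} {εv : ℕ → Ω → Fin m → ℝ} {η x e : ℕ → Ω → Fin n → ℝ}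

namespace IsStateRecursion

lemma memLp [IsFiniteMeasure (ℙ : Measure Ω)] {p : ENNReal}
    (hx : IsStateRecursion A β u x₀ η x) (hη : ∀ l, MemLp (η (l + 1)) p ℙ) (s : ℕ) :
    MemLp (x s) p ℙ := by
  induction s with
  | zero => rw [funext hx.zero]; exact memLp_const x₀
  | succ s ih =>
    rw [funext (hx.succ s)]
    exact ((memLp_const (u (s + 1))).add (ih.mulVec A)).add ((hη s).mulVec β)

lemma aestronglyMeasurable {m' : MeasurableSpace Ω} (hx : IsStateRecursion A β u x₀ η x)
    (hη : ∀ l, AEStronglyMeasurable[m'] (η (l + 1)) ℙ) (s : ℕ) :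
    AEStronglyMeasurable[m'] (x s) ℙ := by
  induction s with
  | zero => rw [funext hx.zero]; fun_prop
  | succ s ih => rw [funext (hx.succ s)]; have := hη s; fun_prop

end IsStateRecursion

namespace IsErrorRecursion

lemma memLp [IsFiniteMeasure (ℙ : Measure Ω)] {p : ENNReal}
    (he : IsErrorRecursion Atil Btil Ctil Ftil Gtil εv η x e)
    (hε : ∀ l, MemLp (εv (l + 1)) p ℙ) (hη : ∀ l, MemLp (η (l + 1)) p ℙ)
    (hx : ∀ s, MemLp (x s) p ℙ) (s : ℕ) : MemLp (e s) p ℙ := by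
  induction s with
  | zero => rw [funext he.zero]; exact memLp_const 0
  | succ s ih =>
    rw [funext (he.succ s)]
    exact ((((ih.mulVec _).sub ((hε s).mulVec _)).sub ((hη s).mulVec _)).add
      ((hx s).mulVec _)).add (memLp_const _)

lemma aestronglyMeasurable {m' : MeasurableSpace Ω}
    (he : IsErrorRecursion Atil Btil Ctil Ftil Gtil εv η x e) {s : ℕ}
    (hε : ∀ l < s, AEStronglyMeasurable[m'] (εv (l + 1)) ℙ)
    (hη : ∀ l, AEStronglyMeasurable[m'] (η (l + 1)) ℙ)
    (hx : ∀ r, AEStronglyMeasurable[m'] (x r) ℙ) : AEStronglyMeasurable[m'] (e s) ℙ := by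
  induction s with
  | zero => rw [funext he.zero]; fun_prop
  | succ s ih =>
    rw [funext (he.succ s)]
    have := ih fun l hl ↦ hε l (by omega)
    have := hε s s.lt_succ_self
    have := hη s
    have := hx s
    fun_prop

lemma covMatrix_succ_left [IsProbabilityMeasure (ℙ : Measure Ω)] {a : ℕ}
    (he : IsErrorRecursion Atil Btil Ctil Ftil Gtil εv η x e) {s : ℕ} {Z : Ω → Fin a → ℝ}
    (hes : MemLp (e s) 2 ℙ) (hε : MemLp (εv (s + 1)) 2 ℙ) (hη : MemLp (η (s + 1)) 2 ℙ)
    (hx : MemLp (x s) 2 ℙ) (hZ : MemLp Z 2 ℙ) :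
    covMatrix (e (s + 1)) Z = Atil (s + 1) * covMatrix (e s) Z
      - Btil (s + 1) * covMatrix (εv (s + 1)) Z - Ctil (s + 1) * covMatrix (η (s + 1)) Z
      + Ftil (s + 1) * covMatrix (x s) Z := by
  have h₁ := hes.mulVec (Atil (s + 1))
  have h₂ := hε.mulVec (Btil (s + 1))
  have h₃ := hη.mulVec (Ctil (s + 1))
  have h₄ := hx.mulVec (Ftil (s + 1))
  rw [funext (he.succ s), covMatrix_add_const_left, covMatrix_add_left, covMatrix_sub_left,
    covMatrix_sub_left, covMatrix_mulVec_left _ hes hZ, covMatrix_mulVec_left _ hε hZ,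
    covMatrix_mulVec_left _ hη hZ, covMatrix_mulVec_left _ hx hZ]
  exacts [h₁, h₂, hZ, h₁.sub h₂, h₃, hZ, (h₁.sub h₂).sub h₃, h₄, hZ,
    (((h₁.sub h₂).sub h₃).add h₄).integrable one_le_two]

theorem covMatrix_noise_eq [IsProbabilityMeasure (ℙ : Measure Ω)] {𝓕 : MeasurableSpace Ω}
    (hx : IsStateRecursion A β u x₀ η x)
    (he : IsErrorRecursion Atil Btil Ctil Ftil Gtil εv η x e)
    (hεL2 : ∀ l, MemLp (εv (l + 1)) 2 ℙ) (hηL2 : ∀ l, MemLp (η (l + 1)) 2 ℙ) {k : ℕ}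
    (hεcov : covMatrix (εv (k + 1)) (εv (k + 1)) = 1)
    (hε𝓕 : ∀ l ≠ k, AEStronglyMeasurable[𝓕] (εv (l + 1)) ℙ)
    (hη𝓕 : ∀ l, AEStronglyMeasurable[𝓕] (η (l + 1)) ℙ)
    (hindep : ∀ {a : ℕ} (W : Ω → Fin a → ℝ), AEStronglyMeasurable[𝓕] W ℙ → W ⟂ᵢ εv (k + 1))
    (d : ℕ) :
    covMatrix (e (k + 1 + d)) (εv (k + 1)) =
      -(ordProd Atil (k + 1) (k + 1 + d) * Btil (k + 1)) := by
  have hxL2 := hx.memLp hηL2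
  have heL2 := he.memLp hεL2 hηL2 hxL2
  have hx𝓕 := hx.aestronglyMeasurable hη𝓕
  have hcov_zero {a : ℕ} (W : Ω → Fin a → ℝ) (hW : AEStronglyMeasurable[𝓕] W ℙ)
      (hW2 : MemLp W 2 ℙ) : covMatrix W (εv (k + 1)) = 0 :=
    covMatrix_eq_zero_of_indepFun (hindep W hW) hW2 (hεL2 k)
  induction d with
  | zero =>
    have he𝓕 : AEStronglyMeasurable[𝓕] (e k) ℙ :=
      he.aestronglyMeasurable (fun l hl ↦ hε𝓕 l hl.ne) hη𝓕 hx𝓕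
    rw [add_zero, he.covMatrix_succ_left (heL2 k) (hεL2 k) (hηL2 k) (hxL2 k) (hεL2 k), hεcov,
      hcov_zero _ he𝓕 (heL2 k), hcov_zero _ (hη𝓕 k) (hηL2 k), hcov_zero _ (hx𝓕 k) (hxL2 k),
      ordProd_self]
    simp
  | succ d ih =>
    rw [← add_assoc, he.covMatrix_succ_left (heL2 _) (hεL2 _) (hηL2 _) (hxL2 _) (hεL2 k), ih,
      hcov_zero _ (hε𝓕 _ (by omega)) (hεL2 _), hcov_zero _ (hη𝓕 _) (hηL2 _),
      hcov_zero _ (hx𝓕 _) (hxL2 _), ordProd_add_one]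
    simp [Matrix.mul_assoc]

end IsErrorRecursion

end StateSpaceModel

theorem filter_error_obs_noise_cross_covariance_general {Ω : Type*} [MeasureSpace Ω]
    [IsProbabilityMeasure (ℙ : Measure Ω)] {n m : ℕ} {t h : ℕ} (hht : h < t)
    (εv : ℕ → Ω → Fin m → ℝ) (η : ℕ → Ω → Fin n → ℝ)
    (hεL2 : ∀ l : ℕ, 1 ≤ l → MemLp (εv l) 2 ℙ)
    (hηL2 : ∀ l : ℕ, 1 ≤ l → MemLp (η l) 2 ℙ)
    (hεcov : ∀ l : ℕ, 1 ≤ l → covMatrix (εv l) (εv l) = 1)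
    -- ε₁, ε₂, …, η₁, η₂, … are mutually independent
    (hindep : iIndepFun
      (β := fun i : ℕ ⊕ ℕ => Sum.elim (fun _ => Fin m → ℝ) (fun _ => Fin n → ℝ) i)
      (m := fun i => Sum.rec (fun _ => (inferInstance : MeasurableSpace (Fin m → ℝ)))
        (fun _ => (inferInstance : MeasurableSpace (Fin n → ℝ))) i)
      (fun i => Sum.rec (fun l => εv (l + 1)) (fun l => η (l + 1)) i) ℙ)
    -- state recursion, deterministic x₀
    (A β : Matrix (Fin n) (Fin n) ℝ) (u : ℕ → Fin n → ℝ) (x₀ : Fin n → ℝ)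
    (x : ℕ → Ω → Fin n → ℝ)
    (hx0 : ∀ ω, x 0 ω = x₀)
    (hxrec : ∀ s : ℕ, ∀ ω, x (s + 1) ω = u (s + 1) + A *ᵥ x s ω + β *ᵥ η (s + 1) ω)
    -- filter error recursion with deterministic coefficients
    (Atil : ℕ → Matrix (Fin n) (Fin n) ℝ) (Btil : ℕ → Matrix (Fin n) (Fin m) ℝ)
    (Ctil Ftil : ℕ → Matrix (Fin n) (Fin n) ℝ) (Gtil : ℕ → Fin n → ℝ)
    (e : ℕ → Ω → Fin n → ℝ)
    (he0 : ∀ ω, e 0 ω = 0)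
    (herec : ∀ s : ℕ, ∀ ω, e (s + 1) ω =
      Atil (s + 1) *ᵥ e s ω - Btil (s + 1) *ᵥ εv (s + 1) ω - Ctil (s + 1) *ᵥ η (s + 1) ω
        + Ftil (s + 1) *ᵥ x s ω + Gtil (s + 1))
    :
    covMatrix (e t) (εv (t - h)) = -(ordProd Atil (t - h) t * Btil (t - h)) := by
  obtain ⟨k, rfl⟩ : ∃ k, t = k + 1 + h := ⟨t - h - 1, by omega⟩
  rw [Nat.add_sub_cancel]
  obtain ⟨𝓕, h𝓕, hindep𝓕⟩ := hindep.exists_indep_of_aemeasurable (by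
    rintro (l | l)
    exacts [(hεL2 _ l.succ_pos).aemeasurable, (hηL2 _ l.succ_pos).aemeasurable]) (.inl k)
  have hε𝓕 (l : ℕ) (hl : l ≠ k) : AEStronglyMeasurable[𝓕] (εv (l + 1)) ℙ := by
    obtain ⟨g, hg, hfg⟩ : ∃ g : Ω → Fin m → ℝ, Measurable[𝓕] g ∧ εv (l + 1) =ᵐ[ℙ] g :=
      h𝓕 (.inl l) (by simpa)
    exact ⟨g, hg.stronglyMeasurable, hfg⟩
  have hη𝓕 (l : ℕ) : AEStronglyMeasurable[𝓕] (η (l + 1)) ℙ := by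
    obtain ⟨g, hg, hfg⟩ : ∃ g : Ω → Fin n → ℝ, Measurable[𝓕] g ∧ η (l + 1) =ᵐ[ℙ] g :=
      h𝓕 (.inr l) (by simp)
    exact ⟨g, hg.stronglyMeasurable, hfg⟩
  exact IsErrorRecursion.covMatrix_noise_eq ⟨hx0, hxrec⟩ ⟨he0, herec⟩
    (fun l ↦ hεL2 _ l.succ_pos) (fun l ↦ hηL2 _ l.succ_pos) (hεcov _ k.succ_pos) hε𝓕 hη𝓕
    hindep𝓕 h

/-- cross-covariance of the filter error with the observation noise. -/
theorem filter_error_obs_noise_cross_covariance {Ω : Type*} [MeasureSpace Ω]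
    [IsProbabilityMeasure (ℙ : Measure Ω)] {n m : ℕ} {t h : ℕ} (hht : h < t)
    (εv : ℕ → Ω → Fin m → ℝ) (η : ℕ → Ω → Fin n → ℝ)
    (hεL2 : ∀ l : ℕ, 1 ≤ l → MemLp (εv l) 2 ℙ)
    (hηL2 : ∀ l : ℕ, 1 ≤ l → MemLp (η l) 2 ℙ)
    (hεmean : ∀ l : ℕ, 1 ≤ l → ∀ i, (∫ ω, εv l ω i) = 0)
    (hηmean : ∀ l : ℕ, 1 ≤ l → ∀ i, (∫ ω, η l ω i) = 0)
    (hεcov : ∀ l : ℕ, 1 ≤ l → covMatrix (εv l) (εv l) = 1)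
    (hηcov : ∀ l : ℕ, 1 ≤ l → covMatrix (η l) (η l) = 1)
    -- ε₁, ε₂, …, η₁, η₂, … are mutually independent
    (hindep : iIndepFun
      (β := fun i : ℕ ⊕ ℕ => Sum.elim (fun _ => Fin m → ℝ) (fun _ => Fin n → ℝ) i)
      (m := fun i => Sum.rec (fun _ => (inferInstance : MeasurableSpace (Fin m → ℝ)))
        (fun _ => (inferInstance : MeasurableSpace (Fin n → ℝ))) i)
      (fun i => Sum.rec (fun l => εv (l + 1)) (fun l => η (l + 1)) i) ℙ)
    -- state recursion, deterministic x₀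
    (A β : Matrix (Fin n) (Fin n) ℝ) (u : ℕ → Fin n → ℝ) (x₀ : Fin n → ℝ)
    (x : ℕ → Ω → Fin n → ℝ)
    (hx0 : ∀ ω, x 0 ω = x₀)
    (hxrec : ∀ s : ℕ, ∀ ω, x (s + 1) ω = u (s + 1) + A *ᵥ x s ω + β *ᵥ η (s + 1) ω)
    -- filter error recursion with deterministic coefficients
    (Atil : ℕ → Matrix (Fin n) (Fin n) ℝ) (Btil : ℕ → Matrix (Fin n) (Fin m) ℝ)
    (Ctil Ftil : ℕ → Matrix (Fin n) (Fin n) ℝ) (Gtil : ℕ → Fin n → ℝ)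
    (e : ℕ → Ω → Fin n → ℝ)
    (he0 : ∀ ω, e 0 ω = 0)
    (herec : ∀ s : ℕ, ∀ ω, e (s + 1) ω =
      Atil (s + 1) *ᵥ e s ω - Btil (s + 1) *ᵥ εv (s + 1) ω - Ctil (s + 1) *ᵥ η (s + 1) ω
        + Ftil (s + 1) *ᵥ x s ω + Gtil (s + 1))
    :
    covMatrix (e t) (εv (t - h)) = -(ordProd Atil (t - h) t * Btil (t - h)) :=
  filter_error_obs_noise_cross_covariance_general hht εv η hεL2 hηL2 hεcov hindep A β u x₀ x hx0
    hxrec Atil Btil Ctil Ftil Gtil e he0 herec
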